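/- arXiv:1712.03434 — 5 statements merged into one kernel-verified Lean document; each statement's English description precedes it below -/
import Mathlib

section
/- Let (Ω, μ) be a σ-finite measure space and {Λ_ω ∈ B(H, H_ω) : ω ∈ Ω} a family with ω ↦ Λ_ω f strongly measurable for each f ∈ H, and K ∈ B(H). Then {Λ_ω} is a c-K-g-frame for H if and only if the synthesis operator T : (⊕_{ω∈Ω} H_ω, μ)_{L²} → H weakly defined by ⟨TF, g⟩ = ∫_Ω ⟨Λ_ω* F(ω), g⟩ dμ(ω) is bounded and R(K) ⊆ R(T). -/
/-!
The pairing identity defining `T` says that `T† f` is the field `ω ↦ Λ_ω f`: testing it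
against the truncations of that field shows that it lies in `L²`, and then that it equals
`T† f`. Hence `∫ ‖Λ_ω f‖² dμ = ‖T† f‖²`, the upper frame bound holds automatically, and the
lower one amounts to `‖K† f‖ ≤ c ‖T† f‖`. Douglas' theorem identifies this with
`R(K) ⊆ R(T)`: one direction is Hahn–Banach and Riesz applied to `T† f ↦ ⟪K x, f⟫`, the
other the open mapping theorem for the projection of `{(x, g) | K x = T g}` onto its
first factor.
-/

open MeasureTheory ContinuousLinearMap Filter Topology
open scoped InnerProductSpace

section Douglas

variable {𝕜 : Type*} [RCLike 𝕜]

theorem exists_dual_comp_eq_of_norm_le {V W : Type*} [AddCommGroup V] [Module 𝕜 V]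
    [NormedAddCommGroup W] [NormedSpace 𝕜 W] (A : V →ₗ[𝕜] W) (φ : V →ₗ[𝕜] 𝕜) (c : ℝ)
    (hφ : ∀ v, ‖φ v‖ ≤ c * ‖A v‖) : ∃ ψ : StrongDual 𝕜 W, ∀ v, ψ (A v) = φ v := by
  have hker : LinearMap.ker A ≤ LinearMap.ker φ := fun v hv => by
    simpa [LinearMap.mem_ker.1 hv] using hφ v
  set φ₀ : LinearMap.range A →ₗ[𝕜] 𝕜 :=
    (LinearMap.ker A).liftQ φ hker ∘ₗ A.quotKerEquivRange.symm.toLinearMap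
  have hφ₀ : ∀ v, φ₀ ⟨A v, LinearMap.mem_range_self A v⟩ = φ v := fun v => by
    simp [φ₀, LinearMap.quotKerEquivRange_symm_apply_image]
  obtain ⟨ψ, hψ, -⟩ := exists_extension_norm_eq _ <| φ₀.mkContinuous c <| by
    rintro ⟨_, v, rfl⟩
    simpa [hφ₀] using hφ v
  exact ⟨ψ, fun v => (hψ _).trans (hφ₀ v)⟩

theorem exists_preimage_norm_le_of_range_le {𝕜 : Type*} [NontriviallyNormedField 𝕜]
    {X Y Z : Type*} [NormedAddCommGroup X] [NormedSpace 𝕜 X] [CompleteSpace X]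
    [NormedAddCommGroup Y] [NormedSpace 𝕜 Y] [CompleteSpace Y]
    [NormedAddCommGroup Z] [NormedSpace 𝕜 Z] (K : X →L[𝕜] Z) (T : Y →L[𝕜] Z)
    (hr : LinearMap.range (K : X →ₗ[𝕜] Z) ≤ LinearMap.range (T : Y →ₗ[𝕜] Z)) :
    ∃ C > 0, ∀ x, ∃ y, T y = K x ∧ ‖y‖ ≤ C * ‖x‖ := by
  set P := LinearMap.ker
    ((K.comp (fst 𝕜 X Y) - T.comp (snd 𝕜 X Y) : X × Y →L[𝕜] Z) : X × Y →ₗ[𝕜] Z)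
  have : CompleteSpace P := (isClosed_ker _).completeSpace_coe
  have hsurj : Function.Surjective ((fst 𝕜 X Y).comp P.subtypeL) := fun x => by
    obtain ⟨y, hy⟩ := hr (LinearMap.mem_range_self _ x)
    exact ⟨⟨(x, y), by simpa [P, sub_eq_zero] using hy.symm⟩, rfl⟩
  obtain ⟨C, hC, hpre⟩ := exists_preimage_norm_le _ hsurj
  refine ⟨C, hC, fun x => ?_⟩
  obtain ⟨⟨⟨x', y⟩, hxy⟩, rfl, hle⟩ := hpre x
  exact ⟨y, (sub_eq_zero.1 hxy).symm, (norm_snd_le (x', y)).trans hle⟩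

variable {G H H' : Type*}
  [NormedAddCommGroup G] [InnerProductSpace 𝕜 G] [CompleteSpace G]
  [NormedAddCommGroup H] [InnerProductSpace 𝕜 H] [CompleteSpace H]
  [NormedAddCommGroup H'] [InnerProductSpace 𝕜 H'] [CompleteSpace H']

theorem range_le_range_of_norm_adjoint_le (K : H' →L[𝕜] H) (T : G →L[𝕜] H) (c : ℝ)
    (hc : ∀ f, ‖K.adjoint f‖ ≤ c * ‖T.adjoint f‖) :
    LinearMap.range (K : H' →ₗ[𝕜] H) ≤ LinearMap.range (T : G →ₗ[𝕜] H) := by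
  rintro _ ⟨x, rfl⟩
  obtain ⟨ψ, hψ⟩ := exists_dual_comp_eq_of_norm_le (T.adjoint : H →ₗ[𝕜] G) (innerₛₗ 𝕜 (K x))
    (‖x‖ * c) fun f => by
      calc ‖⟪K x, f⟫_𝕜‖ = ‖⟪x, K.adjoint f⟫_𝕜‖ := by rw [adjoint_inner_right]
        _ ≤ ‖x‖ * ‖K.adjoint f‖ := norm_inner_le_norm _ _
        _ ≤ ‖x‖ * c * ‖T.adjoint f‖ := by rw [mul_assoc]; gcongr; exact hc f
  refine ⟨(InnerProductSpace.toDual 𝕜 G).symm ψ, ext_inner_right 𝕜 fun f => ?_⟩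
  simpa [← adjoint_inner_right T, InnerProductSpace.toDual_symm_apply] using hψ f

theorem exists_norm_adjoint_le_of_range_le (K : H' →L[𝕜] H) (T : G →L[𝕜] H)
    (hr : LinearMap.range (K : H' →ₗ[𝕜] H) ≤ LinearMap.range (T : G →ₗ[𝕜] H)) :
    ∃ c, ∀ f, ‖K.adjoint f‖ ≤ c * ‖T.adjoint f‖ := by
  obtain ⟨C, hC, hpre⟩ := exists_preimage_norm_le_of_range_le K T hr
  refine ⟨C, fun f => ?_⟩
  obtain ⟨g, hg, hg_norm⟩ := hpre (K.adjoint f)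
  have hsq : ‖K.adjoint f‖ ^ 2 ≤ C * ‖K.adjoint f‖ * ‖T.adjoint f‖ :=
    calc ‖K.adjoint f‖ ^ 2 = RCLike.re ⟪K.adjoint f, K.adjoint f⟫_𝕜 := norm_sq_eq_re_inner _
      _ = RCLike.re ⟪g, T.adjoint f⟫_𝕜 := by
        rw [adjoint_inner_right, ← hg, adjoint_inner_right]
      _ ≤ ‖g‖ * ‖T.adjoint f‖ := re_inner_le_norm _ _
      _ ≤ C * ‖K.adjoint f‖ * ‖T.adjoint f‖ := by gcongr
  nlinarith [norm_nonneg (K.adjoint f), mul_nonneg hC.le (norm_nonneg (T.adjoint f))]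

theorem range_le_range_iff_exists_norm_adjoint_le (K : H' →L[𝕜] H) (T : G →L[𝕜] H) :
    LinearMap.range (K : H' →ₗ[𝕜] H) ≤ LinearMap.range (T : G →ₗ[𝕜] H) ↔
      ∃ c, ∀ f, ‖K.adjoint f‖ ≤ c * ‖T.adjoint f‖ :=
  ⟨exists_norm_adjoint_le_of_range_le K T,
    fun ⟨c, hc⟩ => range_le_range_of_norm_adjoint_le K T c hc⟩

end Douglas

theorem exists_frame_bounds_iff {𝕜 V W X : Type*} [NontriviallyNormedField 𝕜]
    [SeminormedAddCommGroup V] [NormedSpace 𝕜 V] [SeminormedAddCommGroup W]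
    [SeminormedAddCommGroup X] [NormedSpace 𝕜 X] (K : V → W) (S : V →L[𝕜] X) :
    (∃ A B : ℝ, 0 < A ∧ A ≤ B ∧ ∀ f, A * ‖K f‖ ^ 2 ≤ ‖S f‖ ^ 2 ∧ ‖S f‖ ^ 2 ≤ B * ‖f‖ ^ 2) ↔
      ∃ c, ∀ f, ‖K f‖ ≤ c * ‖S f‖ := by
  constructor
  · rintro ⟨A, B, hA, -, hbounds⟩
    have hsqrtA : 0 < √A := Real.sqrt_pos.2 hA
    refine ⟨(√A)⁻¹, fun f => (le_inv_mul_iff₀ hsqrtA).2 ?_⟩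
    refine (sq_le_sq₀ (by positivity) (norm_nonneg _)).1 ?_
    rw [mul_pow, Real.sq_sqrt hA.le]
    exact (hbounds f).1
  · rintro ⟨c, hc⟩
    set c' := max c 1
    have hc' : 0 < c' := lt_max_of_lt_right one_pos
    refine ⟨(c' ^ 2)⁻¹, max (c' ^ 2)⁻¹ (‖S‖ ^ 2), by positivity, le_max_left _ _,
      fun f => ⟨?_, ?_⟩⟩
    · rw [inv_mul_le_iff₀ (by positivity), ← mul_pow]
      gcongr
      exact (hc f).trans (by gcongr; exact le_max_left _ _)
    · calc ‖S f‖ ^ 2 ≤ (‖S‖ * ‖f‖) ^ 2 := by gcongr; exact S.le_opNorm f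
        _ ≤ max (c' ^ 2)⁻¹ (‖S‖ ^ 2) * ‖f‖ ^ 2 := by
          rw [mul_pow]; gcongr; exact le_max_right _ _

section L2Duality

variable {𝕜 E Ω : Type*} [RCLike 𝕜] [NormedAddCommGroup E] [InnerProductSpace 𝕜 E]
  [MeasurableSpace Ω] {μ : Measure Ω} {G : Ω → E} {h : Lp E 2 μ}

theorem norm_toLp_indicator_le_of_forall_inner_eq_integral {s : Set Ω}
    (hs : MemLp (s.indicator G) 2 μ) (hh : ∀ F : Lp E 2 μ, ⟪F, h⟫_𝕜 = ∫ ω, ⟪F ω, G ω⟫_𝕜 ∂μ) :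
    ‖hs.toLp‖ ≤ ‖h‖ := by
  have hself : ⟪hs.toLp, hs.toLp⟫_𝕜 = ⟪hs.toLp, h⟫_𝕜 := by
    rw [hh, L2.inner_def]
    refine integral_congr_ae ?_
    filter_upwards [hs.coeFn_toLp] with ω hω
    rw [hω]
    by_cases hω' : ω ∈ s
    · rw [Set.indicator_of_mem hω']
    · simp [Set.indicator_of_notMem hω']
  have hsq : ‖hs.toLp‖ ^ 2 ≤ ‖hs.toLp‖ * ‖h‖ := by
    rw [@norm_sq_eq_re_inner 𝕜, hself]
    exact re_inner_le_norm _ _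
  nlinarith [norm_nonneg hs.toLp, norm_nonneg h]

theorem memLp_two_of_forall_inner_eq_integral [SigmaFinite μ] (hG : StronglyMeasurable G)
    (hh : ∀ F : Lp E 2 μ, ⟪F, h⟫_𝕜 = ∫ ω, ⟪F ω, G ω⟫_𝕜 ∂μ) : MemLp G 2 μ := by
  set s : ℕ → Set Ω := fun n => {ω | ‖G ω‖ ≤ n} ∩ spanningSets μ n
  have hs : ∀ n, MeasurableSet (s n) := fun n =>
    (measurableSet_le hG.norm.measurable measurable_const).inter (measurableSet_spanningSets μ n)
  have hGs : ∀ n, MemLp ((s n).indicator G) 2 μ := fun n =>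
    (memLp_indicator_const 2 (hs n) (n : ℝ) (.inr
      ((measure_mono Set.inter_subset_right).trans_lt (measure_spanningSets_lt_top μ n)).ne)).of_le
      (hG.aestronglyMeasurable.indicator (hs n)) (.of_forall fun ω => by
        by_cases hω : ω ∈ s n
        · simpa [hω] using hω.1
        · simp [hω])
  have htendsto : ∀ ω, Tendsto (fun n => (s n).indicator G ω) atTop (𝓝 (G ω)) := fun ω =>
    tendsto_const_nhds.congr' <| by
      filter_upwards [eventually_ge_atTop ⌈‖G ω‖⌉₊, eventually_ge_atTop (spanningSetsIndex μ ω)]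
        with n hn hn'
      have hmem : ω ∈ s n := ⟨(Nat.le_ceil ‖G ω‖).trans (by exact_mod_cast hn),
        mem_spanningSets_of_index_le μ ω hn'⟩
      exact (Set.indicator_of_mem hmem G).symm
  refine ⟨hG.aestronglyMeasurable, (?_ : _ ≤ ‖h‖ₑ).trans_lt enorm_lt_top⟩
  refine Lp.eLpNorm_le_of_ae_tendsto (.of_forall fun n => ?_)
    (fun n => (hGs n).aestronglyMeasurable) (.of_forall htendsto)
  rw [← Lp.enorm_toLp (hGs n)]
  exact enorm_le_iff_norm_le.2 (norm_toLp_indicator_le_of_forall_inner_eq_integral (hGs n) hh)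

theorem ae_eq_of_forall_inner_eq_integral [SigmaFinite μ] (hG : StronglyMeasurable G)
    (hh : ∀ F : Lp E 2 μ, ⟪F, h⟫_𝕜 = ∫ ω, ⟪F ω, G ω⟫_𝕜 ∂μ) : h =ᵐ[μ] G := by
  have hG₂ := memLp_two_of_forall_inner_eq_integral hG hh
  have : h = hG₂.toLp := ext_inner_left 𝕜 fun F => by
    rw [hh, L2.inner_def]
    refine integral_congr_ae ?_
    filter_upwards [hG₂.coeFn_toLp] with ω hω
    rw [hω]
  exact this ▸ hG₂.coeFn_toLp

theorem integral_norm_sq_eq_of_forall_inner_eq_integral [SigmaFinite μ]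
    (hG : StronglyMeasurable G) (hh : ∀ F : Lp E 2 μ, ⟪F, h⟫_𝕜 = ∫ ω, ⟪F ω, G ω⟫_𝕜 ∂μ) :
    ∫ ω, ‖G ω‖ ^ 2 ∂μ = ‖h‖ ^ 2 := by
  refine RCLike.ofReal_injective (K := 𝕜) ?_
  calc ((∫ ω, ‖G ω‖ ^ 2 ∂μ : ℝ) : 𝕜) = ∫ ω, ⟪h ω, h ω⟫_𝕜 ∂μ := by
        rw [← integral_ofReal]
        refine integral_congr_ae ?_
        filter_upwards [ae_eq_of_forall_inner_eq_integral hG hh] with ω hω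
        rw [hω, inner_self_eq_norm_sq_to_K, RCLike.ofReal_pow]
    _ = ((‖h‖ ^ 2 : ℝ) : 𝕜) := by
        rw [← L2.inner_def, inner_self_eq_norm_sq_to_K, RCLike.ofReal_pow]

end L2Duality

local notation "⟪" x ", " y "⟫" => @inner ℂ _ _ x y

/-- `{Λ_ω}` is a c-K-g-frame iff the (bounded) synthesis operator `T` on the
direct-integral space satisfies `R(K) ⊆ R(T)`. -/
theorem cKg_frame_iff_range_inclusion
    {H E Ω : Type*} [NormedAddCommGroup H] [InnerProductSpace ℂ H] [CompleteSpace H]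
    [NormedAddCommGroup E] [InnerProductSpace ℂ E] [CompleteSpace E]
    [MeasurableSpace Ω] (μ : Measure Ω) [SigmaFinite μ]
    (K : H →L[ℂ] H) (Λ : Ω → (H →L[ℂ] E))
    (hmeas : ∀ f : H, StronglyMeasurable fun ω => Λ ω f)
    (T : Lp E 2 μ →L[ℂ] H)
    (hT : ∀ (F : Lp E 2 μ) (g : H),
      ⟪T F, g⟫ = ∫ ω, ⟪(Λ ω).adjoint (F ω), g⟫ ∂μ) :
    (∃ A B : ℝ, 0 < A ∧ A ≤ B ∧ ∀ f : H,
        A * ‖K.adjoint f‖ ^ 2 ≤ ∫ ω, ‖Λ ω f‖ ^ 2 ∂μ ∧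
        ∫ ω, ‖Λ ω f‖ ^ 2 ∂μ ≤ B * ‖f‖ ^ 2) ↔
    (LinearMap.range (K : H →ₗ[ℂ] H) ≤ LinearMap.range (T : Lp E 2 μ →ₗ[ℂ] H)) := by
  have hsynthesis : ∀ f, ∫ ω, ‖Λ ω f‖ ^ 2 ∂μ = ‖T.adjoint f‖ ^ 2 := fun f =>
    integral_norm_sq_eq_of_forall_inner_eq_integral (𝕜 := ℂ) (hmeas f) fun F => by
      simp_rw [adjoint_inner_right, hT, adjoint_inner_left]
  simp only [hsynthesis]
  rw [range_le_range_iff_exists_norm_adjoint_le]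
  exact exists_frame_bounds_iff _ _
end

section
/- Let K ∈ B(H) have closed range, and let {Λ_ω}, {Γ_ω} be c-g-Bessel families satisfying ⟨Kf, h⟩ = ∫_Ω ⟨Λ_ω* Γ_ω f, h⟩ dμ(ω) for all f, h ∈ H. Define Θ_ω = Γ_ω (K†|_{R(K)}), where K† is the pseudo-inverse of K. Then {Θ_ω} is a c-g-Bessel family for R(K) with bound B‖K†‖², and ⟨f, h⟩ = ∫_Ω ⟨Λ_ω* Θ_ω f, h⟩ dμ(ω) for all f ∈ R(K), h ∈ H. -/
open MeasureTheory ContinuousLinearMap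

local notation "⟪" x ", " y "⟫" => @inner ℂ _ _ x y

theorem integral_norm_sq_comp_le_of_bessel {𝕜 F H E Ω : Type*} [NontriviallyNormedField 𝕜]
    [SeminormedAddCommGroup F] [NormedSpace 𝕜 F] [SeminormedAddCommGroup H] [NormedSpace 𝕜 H]
    [NormedAddCommGroup E] [MeasurableSpace Ω] (μ : Measure Ω) (Γ : Ω → H → E) {B : ℝ}
    (hB : 0 ≤ B) (hBessel : ∀ f : H, ∫ ω, ‖Γ ω f‖ ^ 2 ∂μ ≤ B * ‖f‖ ^ 2)
    (T : F →L[𝕜] H) (f : F) :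
    ∫ ω, ‖Γ ω (T f)‖ ^ 2 ∂μ ≤ B * ‖T‖ ^ 2 * ‖f‖ ^ 2 :=
  calc ∫ ω, ‖Γ ω (T f)‖ ^ 2 ∂μ ≤ B * ‖T f‖ ^ 2 := hBessel (T f)
    _ ≤ B * (‖T‖ * ‖f‖) ^ 2 := by gcongr; exact T.le_opNorm f
    _ = B * ‖T‖ ^ 2 * ‖f‖ ^ 2 := by ring

theorem dual_on_range_of_K_general
    {H E Ω : Type*} [NormedAddCommGroup H] [InnerProductSpace ℂ H] [CompleteSpace H]
    [NormedAddCommGroup E] [InnerProductSpace ℂ E] [CompleteSpace E]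
    [MeasurableSpace Ω] (μ : Measure Ω)
    (K : H →L[ℂ] H)
    (Kdag : H →L[ℂ] H) (hKdag : ∀ f ∈ LinearMap.range (K : H →ₗ[ℂ] H), K (Kdag f) = f)
    (Λ Γ : Ω → (H →L[ℂ] E))
    (B : ℝ) (hB : 0 < B)
    (hBesselΓ : ∀ f : H, ∫ ω, ‖Γ ω f‖ ^ 2 ∂μ ≤ B * ‖f‖ ^ 2)
    (hrel : ∀ f h : H, ⟪K f, h⟫ = ∫ ω, ⟪(Λ ω).adjoint (Γ ω f), h⟫ ∂μ) :
    (∀ f ∈ LinearMap.range (K : H →ₗ[ℂ] H),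
        ∫ ω, ‖Γ ω (Kdag f)‖ ^ 2 ∂μ ≤ B * ‖Kdag‖ ^ 2 * ‖f‖ ^ 2) ∧
    (∀ f ∈ LinearMap.range (K : H →ₗ[ℂ] H), ∀ h : H,
        ⟪f, h⟫ = ∫ ω, ⟪(Λ ω).adjoint (Γ ω (Kdag f)), h⟫ ∂μ) := by
  refine ⟨fun f _ => integral_norm_sq_comp_le_of_bessel μ (fun ω => Γ ω) hB.le hBesselΓ Kdag f,
    fun f hf h => ?_⟩
  rw [← hrel, hKdag f hf]

/-- With `Θ_ω = Γ_ω ∘ K†` on `R(K)`: `{Θ_ω}` is c-g-Bessel for `R(K)` with bound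
`B‖K†‖²` and `⟨f, h⟩ = ∫ ⟨Λ_ω* Θ_ω f, h⟩ dμ` for `f ∈ R(K)`, `h ∈ H`. -/
theorem dual_on_range_of_K
    {H E Ω : Type*} [NormedAddCommGroup H] [InnerProductSpace ℂ H] [CompleteSpace H]
    [NormedAddCommGroup E] [InnerProductSpace ℂ E] [CompleteSpace E]
    [MeasurableSpace Ω] (μ : Measure Ω)
    (K : H →L[ℂ] H) (hK : IsClosed (LinearMap.range (K : H →ₗ[ℂ] H) : Set H))
    (Kdag : H →L[ℂ] H) (hKdag : ∀ f ∈ LinearMap.range (K : H →ₗ[ℂ] H), K (Kdag f) = f)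
    (Λ Γ : Ω → (H →L[ℂ] E))
    (hmeasΛ : ∀ f : H, StronglyMeasurable fun ω => Λ ω f)
    (hmeasΓ : ∀ f : H, StronglyMeasurable fun ω => Γ ω f)
    (BΛ : ℝ) (hBΛ : 0 < BΛ)
    (hBesselΛ : ∀ f : H, ∫ ω, ‖Λ ω f‖ ^ 2 ∂μ ≤ BΛ * ‖f‖ ^ 2)
    (B : ℝ) (hB : 0 < B)
    (hBesselΓ : ∀ f : H, ∫ ω, ‖Γ ω f‖ ^ 2 ∂μ ≤ B * ‖f‖ ^ 2)
    (hrel : ∀ f h : H, ⟪K f, h⟫ = ∫ ω, ⟪(Λ ω).adjoint (Γ ω f), h⟫ ∂μ) :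
    (∀ f ∈ LinearMap.range (K : H →ₗ[ℂ] H),
        ∫ ω, ‖Γ ω (Kdag f)‖ ^ 2 ∂μ ≤ B * ‖Kdag‖ ^ 2 * ‖f‖ ^ 2) ∧
    (∀ f ∈ LinearMap.range (K : H →ₗ[ℂ] H), ∀ h : H,
        ⟪f, h⟫ = ∫ ω, ⟪(Λ ω).adjoint (Γ ω (Kdag f)), h⟫ ∂μ) :=
  dual_on_range_of_K_general μ K Kdag hKdag Λ Γ B hB hBesselΓ hrel
end

section
/- Under the hypotheses that K ∈ B(H) has closed range, {Λ_ω}, {Γ_ω} are c-g-Bessel families with ⟨Kf, h⟩ = ∫_Ω ⟨Λ_ω* Γ_ω f, h⟩ dμ(ω) for all f, h, and Θ_ω = Γ_ω (K†|_{R(K)}), the families {Λ_ω} and {Θ_ω} are interchangeable on R(K): for all f, h ∈ R(K), ⟨f, h⟩ = ∫_Ω ⟨Λ_ω* Θ_ω f, h⟩ dμ(ω) = ∫_Ω ⟨Θ_ω* Λ_ω f, h⟩ dμ(ω). -/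
/-!
On `R(K)` the pseudo-inverse is a right inverse of `K`, so the representation
`⟨K g, h⟩ = ∫ ⟨Λ_ω* Γ_ω g, h⟩` applied to `g = K† f` gives the first identity. The second is
the complex conjugate of the first with `f` and `h` swapped, since
`⟨Θ_ω* Λ_ω f, h⟩ = conj ⟨Λ_ω* Θ_ω h, f⟩` pointwise and conjugation commutes with the integral.
-/

open MeasureTheory ContinuousLinearMap

local notation "⟪" x ", " y "⟫" => @inner ℂ _ _ x y

section

variable {𝕜 G H E Ω : Type*} [RCLike 𝕜]
  [NormedAddCommGroup G] [InnerProductSpace 𝕜 G] [CompleteSpace G]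
  [NormedAddCommGroup H] [InnerProductSpace 𝕜 H] [CompleteSpace H]
  [NormedAddCommGroup E] [InnerProductSpace 𝕜 E] [CompleteSpace E]
  [MeasurableSpace Ω] (μ : Measure Ω)

theorem integral_inner_adjoint_apply_eq_conj (A : Ω → H →L[𝕜] E) (B : Ω → G →L[𝕜] E)
    (g : G) (h : H) :
    ∫ ω, inner 𝕜 ((A ω).adjoint (B ω g)) h ∂μ =
      starRingEnd 𝕜 (∫ ω, inner 𝕜 ((B ω).adjoint (A ω h)) g ∂μ) := by
  rw [← integral_conj]
  congr 1
  ext ω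
  rw [inner_conj_symm, adjoint_inner_right, adjoint_inner_left]

theorem inner_eq_integral_of_apply_rightInverse {K Kdag : H →L[𝕜] H} {Λ Γ : Ω → H →L[𝕜] E}
    (hrel : ∀ f h : H, inner 𝕜 (K f) h = ∫ ω, inner 𝕜 ((Λ ω).adjoint (Γ ω f)) h ∂μ)
    {f : H} (hf : K (Kdag f) = f) (h : H) :
    inner 𝕜 f h = ∫ ω, inner 𝕜 ((Λ ω).adjoint (Γ ω (Kdag f))) h ∂μ := by
  rw [← hrel, hf]

end

theorem interchangeable_on_range_general
    {H E Ω : Type*} [NormedAddCommGroup H] [InnerProductSpace ℂ H] [CompleteSpace H]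
    [NormedAddCommGroup E] [InnerProductSpace ℂ E] [CompleteSpace E]
    [MeasurableSpace Ω] (μ : Measure Ω)
    (K : H →L[ℂ] H)
    (Kdag : H →L[ℂ] H) (hKdag : ∀ f ∈ LinearMap.range (K : H →ₗ[ℂ] H), K (Kdag f) = f)
    (Λ Γ : Ω → (H →L[ℂ] E))
    (hrel : ∀ f h : H, ⟪K f, h⟫ = ∫ ω, ⟪(Λ ω).adjoint (Γ ω f), h⟫ ∂μ) :
    ∀ f ∈ LinearMap.range (K : H →ₗ[ℂ] H), ∀ h ∈ LinearMap.range (K : H →ₗ[ℂ] H),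
      ⟪f, h⟫ = ∫ ω, ⟪(Λ ω).adjoint (Γ ω (Kdag f)), h⟫ ∂μ ∧
      ⟪f, h⟫ = ∫ ω, ⟪((Γ ω).comp Kdag).adjoint (Λ ω f), h⟫ ∂μ := by
  intro f hf h hh
  refine ⟨inner_eq_integral_of_apply_rightInverse μ hrel (hKdag f hf) h, ?_⟩
  rw [integral_inner_adjoint_apply_eq_conj, ← inner_conj_symm f h]
  exact congrArg _ (inner_eq_integral_of_apply_rightInverse μ hrel (hKdag h hh) f)

/-- `{Λ_ω}` and `{Θ_ω}`, where `Θ_ω = Γ_ω ∘ K†`, are interchangeable on `R(K)`: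
for `f, h ∈ R(K)`, `⟨f, h⟩ = ∫ ⟨Λ_ω* Θ_ω f, h⟩ dμ = ∫ ⟨Θ_ω* Λ_ω f, h⟩ dμ`. -/
theorem interchangeable_on_range
    {H E Ω : Type*} [NormedAddCommGroup H] [InnerProductSpace ℂ H] [CompleteSpace H]
    [NormedAddCommGroup E] [InnerProductSpace ℂ E] [CompleteSpace E]
    [MeasurableSpace Ω] (μ : Measure Ω)
    (K : H →L[ℂ] H) (hK : IsClosed (LinearMap.range (K : H →ₗ[ℂ] H) : Set H))
    (Kdag : H →L[ℂ] H) (hKdag : ∀ f ∈ LinearMap.range (K : H →ₗ[ℂ] H), K (Kdag f) = f)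
    (Λ Γ : Ω → (H →L[ℂ] E))
    (hmeasΛ : ∀ f : H, StronglyMeasurable fun ω => Λ ω f)
    (hmeasΓ : ∀ f : H, StronglyMeasurable fun ω => Γ ω f)
    (BΛ : ℝ) (hBΛ : 0 < BΛ)
    (hBesselΛ : ∀ f : H, ∫ ω, ‖Λ ω f‖ ^ 2 ∂μ ≤ BΛ * ‖f‖ ^ 2)
    (B : ℝ) (hB : 0 < B)
    (hBesselΓ : ∀ f : H, ∫ ω, ‖Γ ω f‖ ^ 2 ∂μ ≤ B * ‖f‖ ^ 2)
    (hrel : ∀ f h : H, ⟪K f, h⟫ = ∫ ω, ⟪(Λ ω).adjoint (Γ ω f), h⟫ ∂μ) :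
    ∀ f ∈ LinearMap.range (K : H →ₗ[ℂ] H), ∀ h ∈ LinearMap.range (K : H →ₗ[ℂ] H),
      ⟪f, h⟫ = ∫ ω, ⟪(Λ ω).adjoint (Γ ω (Kdag f)), h⟫ ∂μ ∧
      ⟪f, h⟫ = ∫ ω, ⟪((Γ ω).comp Kdag).adjoint (Λ ω f), h⟫ ∂μ :=
  interchangeable_on_range_general μ K Kdag hKdag Λ Γ hrel
end

section
/- Let K ∈ B(H). If {Λ_ω}_{ω∈Ω} is a c-K-g-frame for H, then for every natural number N, the family {Λ_ω (K*)^N}_{ω∈Ω} is a c-K^{N+1}-g-frame for H. -/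
open MeasureTheory ContinuousLinearMap

local notation "⟪" x ", " y "⟫" => @inner ℂ _ _ x y

set_option maxHeartbeats 1000000 in
/-- If `{Λ_ω}` is a c-K-g-frame, then `{Λ_ω (K*)^N}` is a c-K^{N+1}-g-frame. -/
theorem cKg_frame_power
    {H E Ω : Type*} [NormedAddCommGroup H] [InnerProductSpace ℂ H] [CompleteSpace H]
    [NormedAddCommGroup E] [InnerProductSpace ℂ E] [CompleteSpace E]
    [MeasurableSpace Ω] (μ : Measure Ω)
    (K : H →L[ℂ] H) (Λ : Ω → (H →L[ℂ] E))
    (hmeas : ∀ f : H, StronglyMeasurable fun ω => Λ ω f)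
    (A B : ℝ) (hA : 0 < A) (hAB : A ≤ B)
    (hframe : ∀ f : H,
      A * ‖K.adjoint f‖ ^ 2 ≤ ∫ ω, ‖Λ ω f‖ ^ 2 ∂μ ∧
      ∫ ω, ‖Λ ω f‖ ^ 2 ∂μ ≤ B * ‖f‖ ^ 2) :
    ∀ N : ℕ, ∃ A' B' : ℝ, 0 < A' ∧ A' ≤ B' ∧ ∀ f : H,
      A' * ‖(K ^ (N + 1)).adjoint f‖ ^ 2 ≤ ∫ ω, ‖Λ ω ((K.adjoint ^ N) f)‖ ^ 2 ∂μ ∧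
      ∫ ω, ‖Λ ω ((K.adjoint ^ N) f)‖ ^ 2 ∂μ ≤ B' * ‖f‖ ^ 2 := by
  intro N
  refine ⟨A, max A (B * (‖K.adjoint‖ ^ N) ^ 2), hA, le_max_left _ _, fun f => ?_⟩
  have hkey : (K ^ (N + 1)).adjoint f = K.adjoint ((K.adjoint ^ N) f) := by
    have : (K ^ (N + 1)).adjoint = K.adjoint ^ (N + 1) := by
      rw [← star_eq_adjoint, ← star_eq_adjoint, star_pow]
    rw [this, pow_succ']
    rfl
  constructor
  · rw [hkey]
    exact (hframe ((K.adjoint ^ N) f)).1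
  · have hg : ‖(K.adjoint ^ N) f‖ ≤ ‖K.adjoint‖ ^ N * ‖f‖ := by
      clear hkey
      induction N with
      | zero => simp
      | succ n ih =>
        have : (K.adjoint ^ (n + 1)) f = K.adjoint ((K.adjoint ^ n) f) := by
          rw [pow_succ']; rfl
        rw [this, pow_succ']
        calc ‖K.adjoint ((K.adjoint ^ n) f)‖ ≤ ‖K.adjoint‖ * ‖(K.adjoint ^ n) f‖ :=
              K.adjoint.le_opNorm _
          _ ≤ ‖K.adjoint‖ * (‖K.adjoint‖ ^ n * ‖f‖) :=
              mul_le_mul_of_nonneg_left ih (norm_nonneg _)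
          _ = ‖K.adjoint‖ * ‖K.adjoint‖ ^ n * ‖f‖ := by ring
    have hB : 0 ≤ B := le_trans hA.le hAB
    calc ∫ ω, ‖Λ ω ((K.adjoint ^ N) f)‖ ^ 2 ∂μ ≤ B * ‖(K.adjoint ^ N) f‖ ^ 2 :=
          (hframe _).2
      _ ≤ B * (‖K.adjoint‖ ^ N * ‖f‖) ^ 2 :=
          mul_le_mul_of_nonneg_left (pow_le_pow_left₀ (norm_nonneg _) hg 2) hB
      _ = B * (‖K.adjoint‖ ^ N) ^ 2 * ‖f‖ ^ 2 := by ring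
      _ ≤ max A (B * (‖K.adjoint‖ ^ N) ^ 2) * ‖f‖ ^ 2 := by
          gcongr
          exact le_max_right _ _
end

section
/- Let K ∈ B(H) have closed range and let {Λ_ω} be a c-K-g-frame with frame operator S (defined weakly by ⟨Sf,g⟩ = ∫_Ω ⟨f, Λ_ω*Λ_ω g⟩ dμ(ω)). Then the restriction of S to R(K), as an operator from R(K) to S(R(K)), is positive, self-adjoint in the quadratic-form sense, and bounded below: ⟨Sf, f⟩ ≥ A‖K* f‖² ≥ (A/‖K†‖²)‖f‖² for all f ∈ R(K), where K† is the pseudo-inverse of K; in particular S|_{R(K)} is injective. -/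
open MeasureTheory ContinuousLinearMap

local notation "⟪" x ", " y "⟫" => @inner ℂ _ _ x y

/-! Since `⟪S f, f⟫ = ∫ ‖Λ ω f‖²`, the quadratic form of `S` is real and nonnegative and the lower
frame bound applies to it directly. On `R(K)` we have `‖f‖² = ⟪K (K† f), f⟫ = ⟪K† f, K* f⟫`, so
`‖f‖ ≤ ‖K†‖ ‖K* f‖`; this gives the last inequality and, with `A > 0`, injectivity. -/

section

variable {𝕜 H E : Type*} [RCLike 𝕜]
  [NormedAddCommGroup H] [InnerProductSpace 𝕜 H] [CompleteSpace H]
  [NormedAddCommGroup E] [InnerProductSpace 𝕜 E] [CompleteSpace E]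

theorem inner_self_eq_integral_norm_sq_of_inner_eq_integral {Ω : Type*} [MeasurableSpace Ω]
    {μ : Measure Ω} {Λ : Ω → H →L[𝕜] E} {S : H →L[𝕜] H}
    (hS : ∀ f g : H, inner 𝕜 (S f) g = ∫ ω, inner 𝕜 f ((Λ ω).adjoint (Λ ω g)) ∂μ) (f : H) :
    inner 𝕜 (S f) f = ((∫ ω, ‖Λ ω f‖ ^ 2 ∂μ : ℝ) : 𝕜) := by
  simp_rw [hS, adjoint_inner_right, inner_self_eq_norm_sq_to_K]
  exact_mod_cast integral_ofReal (𝕜 := 𝕜)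

theorem norm_le_norm_mul_norm_adjoint_of_apply_eq {K : E →L[𝕜] H} {Kdag : H →L[𝕜] E}
    {f : H} (hf : K (Kdag f) = f) : ‖f‖ ≤ ‖Kdag‖ * ‖K.adjoint f‖ := by
  have hsq : ‖f‖ ^ 2 ≤ ‖Kdag‖ * ‖K.adjoint f‖ * ‖f‖ :=
    calc ‖f‖ ^ 2 = RCLike.re (inner 𝕜 (Kdag f) (K.adjoint f)) := by
          rw [adjoint_inner_right, hf, inner_self_eq_norm_sq]
      _ ≤ ‖Kdag f‖ * ‖K.adjoint f‖ := re_inner_le_norm _ _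
      _ ≤ ‖Kdag‖ * ‖f‖ * ‖K.adjoint f‖ := by gcongr; exact Kdag.le_opNorm f
      _ = ‖Kdag‖ * ‖K.adjoint f‖ * ‖f‖ := by ring
  rcases (norm_nonneg f).eq_or_lt with hf0 | hfpos
  · rw [← hf0]; positivity
  · exact le_of_mul_le_mul_right (by rwa [← sq]) hfpos

end

/-- When `c = 0` the left side is `0` because `a / 0 = 0`. -/
theorem div_sq_mul_sq_le_mul_sq_of_le_mul {a c x y : ℝ} (ha : 0 ≤ a) (hc : 0 ≤ c)
    (hx : 0 ≤ x) (hy : 0 ≤ y) (h : x ≤ c * y) : a / c ^ 2 * x ^ 2 ≤ a * y ^ 2 := by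
  have hxy : x / c ≤ y := div_le_of_le_mul₀ hc hy (by linarith)
  calc a / c ^ 2 * x ^ 2 = a * (x / c) ^ 2 := by ring
    _ ≤ a * y ^ 2 := by gcongr

theorem frame_operator_bounded_below_on_range_general
    {H E Ω : Type*} [NormedAddCommGroup H] [InnerProductSpace ℂ H] [CompleteSpace H]
    [NormedAddCommGroup E] [InnerProductSpace ℂ E] [CompleteSpace E]
    [MeasurableSpace Ω] (μ : Measure Ω)
    (K : H →L[ℂ] H)
    (Kdag : H →L[ℂ] H) (hKdag : ∀ f ∈ LinearMap.range (K : H →ₗ[ℂ] H), K (Kdag f) = f)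
    (Λ : Ω → (H →L[ℂ] E))
    (A B : ℝ) (hA : 0 < A)
    (hframe : ∀ f : H,
      A * ‖K.adjoint f‖ ^ 2 ≤ ∫ ω, ‖Λ ω f‖ ^ 2 ∂μ ∧
      ∫ ω, ‖Λ ω f‖ ^ 2 ∂μ ≤ B * ‖f‖ ^ 2)
    (S : H →L[ℂ] H)
    (hS : ∀ f g : H, ⟪S f, g⟫ = ∫ ω, ⟪f, (Λ ω).adjoint (Λ ω g)⟫ ∂μ) :
    (∀ f ∈ LinearMap.range (K : H →ₗ[ℂ] H),
        0 ≤ (⟪S f, f⟫).re ∧ (⟪S f, f⟫).im = 0 ∧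
        A * ‖K.adjoint f‖ ^ 2 ≤ (⟪S f, f⟫).re ∧
        A / ‖Kdag‖ ^ 2 * ‖f‖ ^ 2 ≤ A * ‖K.adjoint f‖ ^ 2) ∧
    (∀ f ∈ LinearMap.range (K : H →ₗ[ℂ] H), S f = 0 → f = 0) := by
  have hquad := inner_self_eq_integral_norm_sq_of_inner_eq_integral hS
  have hnorm f (hf : f ∈ LinearMap.range (K : H →ₗ[ℂ] H)) :=
    norm_le_norm_mul_norm_adjoint_of_apply_eq (hKdag f hf)
  refine ⟨fun f hf => ?_, fun f hf hSf => ?_⟩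
  · rw [hquad]
    exact ⟨integral_nonneg fun ω => sq_nonneg _, rfl, (hframe f).1,
      div_sq_mul_sq_le_mul_sq_of_le_mul hA.le (norm_nonneg _) (norm_nonneg _) (norm_nonneg _)
        (hnorm f hf)⟩
  · have hadj : K.adjoint f = 0 := by
      have hint : ∫ ω, ‖Λ ω f‖ ^ 2 ∂μ = 0 := by
        simpa [hSf] using (congrArg Complex.re (hquad f)).symm
      have hsq : ‖K.adjoint f‖ ^ 2 ≤ 0 := nonpos_of_mul_nonpos_right (hint ▸ (hframe f).1) hA
      exact norm_eq_zero.mp (pow_eq_zero_iff two_ne_zero |>.mp (hsq.antisymm (sq_nonneg _)))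
    simpa [hadj] using hnorm f hf

/-- For a c-K-g-frame with `K` of closed range, the frame operator `S` restricted to
`R(K)` is positive, self-adjoint in the quadratic-form sense, bounded below:
`⟨Sf, f⟩ ≥ A‖K* f‖² ≥ (A/‖K†‖²)‖f‖²` for `f ∈ R(K)`; in particular it is injective. -/
theorem frame_operator_bounded_below_on_range
    {H E Ω : Type*} [NormedAddCommGroup H] [InnerProductSpace ℂ H] [CompleteSpace H]
    [NormedAddCommGroup E] [InnerProductSpace ℂ E] [CompleteSpace E]
    [MeasurableSpace Ω] (μ : Measure Ω)
    (K : H →L[ℂ] H) (hK : IsClosed (LinearMap.range (K : H →ₗ[ℂ] H) : Set H))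
    (Kdag : H →L[ℂ] H) (hKdag : ∀ f ∈ LinearMap.range (K : H →ₗ[ℂ] H), K (Kdag f) = f)
    (Λ : Ω → (H →L[ℂ] E))
    (hmeas : ∀ f : H, StronglyMeasurable fun ω => Λ ω f)
    (A B : ℝ) (hA : 0 < A) (hAB : A ≤ B)
    (hframe : ∀ f : H,
      A * ‖K.adjoint f‖ ^ 2 ≤ ∫ ω, ‖Λ ω f‖ ^ 2 ∂μ ∧
      ∫ ω, ‖Λ ω f‖ ^ 2 ∂μ ≤ B * ‖f‖ ^ 2)
    (S : H →L[ℂ] H)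
    (hS : ∀ f g : H, ⟪S f, g⟫ = ∫ ω, ⟪f, (Λ ω).adjoint (Λ ω g)⟫ ∂μ) :
    (∀ f ∈ LinearMap.range (K : H →ₗ[ℂ] H),
        0 ≤ (⟪S f, f⟫).re ∧ (⟪S f, f⟫).im = 0 ∧
        A * ‖K.adjoint f‖ ^ 2 ≤ (⟪S f, f⟫).re ∧
        A / ‖Kdag‖ ^ 2 * ‖f‖ ^ 2 ≤ A * ‖K.adjoint f‖ ^ 2) ∧
    (∀ f ∈ LinearMap.range (K : H →ₗ[ℂ] H), S f = 0 → f = 0) :=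
  frame_operator_bounded_below_on_range_general μ K Kdag hKdag Λ A B hA hframe S hS
end
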